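/- arXiv:1512.07308 — 3 statements merged into one kernel-verified Lean document; each statement's English description precedes it below -/
import Mathlib

section
/- (Proposition 1, divergence part) Suppose K_∞ = L_∞ = ∞. Then C = D = ∞, and for every l ≥ 0 and every real x < 0, Q_n^{(l)}(x) → ∞ as n → ∞. -/
/-!
With `a n = λ_{n+l} π_{n+l}` the recurrence of the associated polynomials becomes the discrete
Sturm–Liouville equation `a_{n+1} ΔQ_{n+1} = a_n ΔQ_n - x π_{n+l+1} Q_{n+1}`. For `x < 0` the
potential term is positive as long as `Q` is, so `a_n ΔQ_n` never drops below its initial value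
`π_l (μ_l - x) ≥ -x π_l`; hence `Q_N ≥ 1 - x π_l ∑_{n<N} 1 / a_n`, which diverges because
`L_∞ = ∞`. The divergence of `C` and `D` is immediate: `K_n ≥ π_0 = 1`, and `K_∞ - K_0 = ∞`.
-/

open Filter Topology ENNReal MeasureTheory

open Finset in
theorem one_add_mul_sum_inv_le_of_weighted_diff_ge {a b q : ℕ → ℝ}
    (ha : ∀ n, 0 < a n) (hb : ∀ n, 0 ≤ b n) (hq0 : 1 ≤ q 0)
    (hq1 : b 0 ≤ a 0 * (q 1 - q 0))
    (hdiff : ∀ n, a n * (q (n + 1) - q n) + b (n + 1) * q (n + 1)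
      ≤ a (n + 1) * (q (n + 2) - q (n + 1))) (n : ℕ) :
    1 + b 0 * ∑ k ∈ range n, (a k)⁻¹ ≤ q n := by
  suffices h : b 0 ≤ a n * (q (n + 1) - q n) ∧ 1 + b 0 * ∑ k ∈ range n, (a k)⁻¹ ≤ q n from h.2
  induction n with
  | zero => simpa using ⟨hq1, hq0⟩
  | succ n ih =>
    obtain ⟨hflux, hlow⟩ := ih
    have hstep : b 0 * (a n)⁻¹ ≤ q (n + 1) - q n := by
      rw [← div_eq_mul_inv, div_le_iff₀ (ha n)]
      linarith
    have hsum : 0 ≤ b 0 * ∑ k ∈ range n, (a k)⁻¹ :=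
      mul_nonneg (hb 0) (sum_nonneg fun k _ => (inv_pos.mpr (ha k)).le)
    have hincr : 0 ≤ b 0 * (a n)⁻¹ := mul_nonneg (hb 0) (inv_pos.mpr (ha n)).le
    have hpos : 0 ≤ q (n + 1) := by linarith
    refine ⟨?_, ?_⟩
    · nlinarith [hdiff n, hb (n + 1)]
    · rw [sum_range_succ, mul_add]
      linarith

theorem tendsto_atTop_of_weighted_diff_ge {a b q : ℕ → ℝ}
    (ha : ∀ n, 0 < a n) (hb : ∀ n, 0 ≤ b n) (hb0 : 0 < b 0)
    (ha_inv : ¬ Summable fun n => (a n)⁻¹) (hq0 : 1 ≤ q 0)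
    (hq1 : b 0 ≤ a 0 * (q 1 - q 0))
    (hdiff : ∀ n, a n * (q (n + 1) - q n) + b (n + 1) * q (n + 1)
      ≤ a (n + 1) * (q (n + 2) - q (n + 1))) :
    Tendsto q atTop atTop := by
  have hsum : Tendsto (fun n => ∑ k ∈ Finset.range n, (a k)⁻¹) atTop atTop :=
    (not_summable_iff_tendsto_nat_atTop_of_nonneg fun k => (inv_pos.mpr (ha k)).le).mp ha_inv
  exact tendsto_atTop_mono (one_add_mul_sum_inv_le_of_weighted_diff_ge ha hb hq0 hq1 hdiff)
    (tendsto_atTop_add_const_left atTop 1 (hsum.const_mul_atTop hb0))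

theorem ENNReal.tsum_mul_eq_top_of_le {α : Type*} {f g : α → ℝ≥0∞} {c : ℝ≥0∞} (hc : c ≠ 0)
    (hg : ∀ n, c ≤ g n) (hf : ∑' n, f n = ⊤) : ∑' n, f n * g n = ⊤ := by
  refine eq_top_iff.mpr (le_trans ?_ (ENNReal.tsum_le_tsum fun n => mul_le_mul_right (hg n) _))
  rw [ENNReal.tsum_mul_right, hf, ENNReal.top_mul hc]

namespace BirthDeath

variable {lam mu pi : ℕ → ℝ}

theorem pi_pos (hlam : ∀ n, 0 < lam n) (hmu : ∀ n, 1 ≤ n → 0 < mu n) (hpi0 : pi 0 = 1)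
    (hpi : ∀ n, pi (n + 1) = pi n * lam n / mu (n + 1)) (n : ℕ) : 0 < pi n := by
  induction n with
  | zero => simp [hpi0]
  | succ n ih => rw [hpi]; exact div_pos (mul_pos ih (hlam n)) (hmu (n + 1) (by omega))

theorem mu_nonneg (hmu0 : 0 ≤ mu 0) (hmu : ∀ n, 1 ≤ n → 0 < mu n) (n : ℕ) : 0 ≤ mu n := by
  rcases n with _ | n
  · exact hmu0
  · exact (hmu (n + 1) (by omega)).le

theorem mu_mul_pi_succ (hmu : ∀ n, 1 ≤ n → 0 < mu n)
    (hpi : ∀ n, pi (n + 1) = pi n * lam n / mu (n + 1)) (n : ℕ) :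
    mu (n + 1) * pi (n + 1) = lam n * pi n := by
  rw [hpi, mul_div_cancel₀ _ (hmu (n + 1) (by omega)).ne', mul_comm]

theorem not_summable_shift (hL : ∑' n, ENNReal.ofReal (1 / (lam n * pi n)) = ⊤) (l : ℕ) :
    ¬ Summable fun n => (lam (n + l) * pi (n + l))⁻¹ := by
  rw [summable_nat_add_iff (f := fun n => (lam n * pi n)⁻¹) l]
  intro hs
  simp_rw [one_div] at hL
  exact hs.tsum_ofReal_ne_top hL

theorem assoc_weighted_diff (hmu : ∀ n, 1 ≤ n → 0 < mu n)
    (hpi : ∀ n, pi (n + 1) = pi n * lam n / mu (n + 1)) {Q : ℕ → ℝ} {l : ℕ} {x : ℝ}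
    (hQrec : ∀ n, lam (n + 1 + l) * Q (n + 2)
      = (lam (n + 1 + l) + mu (n + 1 + l) - x) * Q (n + 1) - mu (n + 1 + l) * Q n) (n : ℕ) :
    lam (n + l) * pi (n + l) * (Q (n + 1) - Q n) + -x * pi (n + 1 + l) * Q (n + 1)
      = lam (n + 1 + l) * pi (n + 1 + l) * (Q (n + 2) - Q (n + 1)) := by
  have hflux := mu_mul_pi_succ hmu hpi (n + l)
  rw [Nat.add_right_comm] at hflux
  linear_combination -pi (n + 1 + l) * hQrec n + (Q n - Q (n + 1)) * hflux

end BirthDeath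

theorem stmt4_general
    (lam mu : ℕ → ℝ) (pi : ℕ → ℝ)
    (hlam : ∀ n, 0 < lam n) (hmu0 : 0 ≤ mu 0) (hmu : ∀ n, 1 ≤ n → 0 < mu n)
    (hpi0 : pi 0 = 1) (hpi : ∀ n, pi (n + 1) = pi n * lam n / mu (n + 1))
    (K : ℕ → ℝ≥0∞) (hK : ∀ n, K n = ∑ i ∈ Finset.range (n + 1), ENNReal.ofReal (pi i))
    (Kinf Linf C D : ℝ≥0∞)
    (hLinf : Linf = ∑' i, ENNReal.ofReal (1 / (lam i * pi i)))
    (hC : C = ∑' n, ENNReal.ofReal (1 / (lam n * pi n)) * K n)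
    (hD : D = ∑' n, ENNReal.ofReal (1 / (lam n * pi n)) * (Kinf - K n))
    (Q : ℕ → ℕ → ℝ → ℝ)
    (hQ0 : ∀ l x, Q l 0 x = 1)
    (hQ1 : ∀ l x, lam l * Q l 1 x = lam l + mu l - x)
    (hQrec : ∀ l n x, lam (n + 1 + l) * Q l (n + 2) x
      = (lam (n + 1 + l) + mu (n + 1 + l) - x) * Q l (n + 1) x - mu (n + 1 + l) * Q l n x)
    (hKtop : Kinf = ⊤) (hLtop : Linf = ⊤) :
    C = ⊤ ∧ D = ⊤ ∧
      ∀ l, ∀ x : ℝ, x < 0 → Tendsto (fun n => Q l n x) atTop atTop := by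
  have hpi_pos := BirthDeath.pi_pos hlam hmu hpi0 hpi
  have hK_ge (n : ℕ) : 1 ≤ K n := by
    rw [hK, ← ENNReal.ofReal_one, ← hpi0]
    exact Finset.single_le_sum (f := fun i => ENNReal.ofReal (pi i)) (fun _ _ => zero_le)
      (Finset.mem_range.mpr n.succ_pos)
  have hK0 : K 0 ≠ ⊤ := by simp [hK]
  rw [hLinf] at hLtop
  refine ⟨hC ▸ ENNReal.tsum_mul_eq_top_of_le one_ne_zero hK_ge hLtop, ?_, fun l x hx => ?_⟩
  · refine hD ▸ ENNReal.tsum_eq_top_of_eq_top ⟨0, ?_⟩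
    rw [hKtop, ENNReal.top_sub hK0, ENNReal.mul_top]
    exact (ENNReal.ofReal_pos.mpr (one_div_pos.mpr (mul_pos (hlam 0) (hpi_pos 0)))).ne'
  refine tendsto_atTop_of_weighted_diff_ge (b := fun n => -x * pi (n + l))
    (fun n => mul_pos (hlam _) (hpi_pos _)) (fun n => (mul_pos (neg_pos.mpr hx) (hpi_pos _)).le)
    (mul_pos (neg_pos.mpr hx) (hpi_pos _)) (BirthDeath.not_summable_shift hLtop l)
    (hQ0 l x).ge ?_
    (fun n => (BirthDeath.assoc_weighted_diff hmu hpi (Q := (Q l · x)) (hQrec l · x) n).le)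
  calc -x * pi (0 + l) ≤ (mu l - x) * pi l := by
        rw [zero_add]
        nlinarith [mul_nonneg (BirthDeath.mu_nonneg hmu0 hmu l) (hpi_pos l).le]
    _ = lam (0 + l) * pi (0 + l) * (Q l 1 x - Q l 0 x) := by
        rw [zero_add, hQ0]; linear_combination -pi l * hQ1 l x

theorem stmt4
    (lam mu : ℕ → ℝ) (pi : ℕ → ℝ)
    (hlam : ∀ n, 0 < lam n) (hmu0 : 0 ≤ mu 0) (hmu : ∀ n, 1 ≤ n → 0 < mu n)
    (hpi0 : pi 0 = 1) (hpi : ∀ n, pi (n + 1) = pi n * lam n / mu (n + 1))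
    (K : ℕ → ℝ≥0∞) (hK : ∀ n, K n = ∑ i ∈ Finset.range (n + 1), ENNReal.ofReal (pi i))
    (Kinf Linf C D : ℝ≥0∞)
    (hKinf : Kinf = ∑' i, ENNReal.ofReal (pi i))
    (hLinf : Linf = ∑' i, ENNReal.ofReal (1 / (lam i * pi i)))
    (hC : C = ∑' n, ENNReal.ofReal (1 / (lam n * pi n)) * K n)
    (hD : D = ∑' n, ENNReal.ofReal (1 / (lam n * pi n)) * (Kinf - K n))
    (Q : ℕ → ℕ → ℝ → ℝ)
    (hQ0 : ∀ l x, Q l 0 x = 1)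
    (hQ1 : ∀ l x, lam l * Q l 1 x = lam l + mu l - x)
    (hQrec : ∀ l n x, lam (n + 1 + l) * Q l (n + 2) x
      = (lam (n + 1 + l) + mu (n + 1 + l) - x) * Q l (n + 1) x - mu (n + 1 + l) * Q l n x)
    (hKtop : Kinf = ⊤) (hLtop : Linf = ⊤) :
    C = ⊤ ∧ D = ⊤ ∧
      ∀ l, ∀ x : ℝ, x < 0 → Tendsto (fun n => Q l n x) atTop atTop :=
  stmt4_general lam mu pi hlam hmu0 hmu hpi0 hpi K hK Kinf Linf C D hLinf hC hD Q hQ0 hQ1 hQrec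
    hKtop hLtop
end

section
/- (Proposition 2(ii)) Suppose K_∞ = ∞, L_∞ < ∞ and C = ∞. Then for every l ≥ 0: (a) for every real x < 0, Q_n^{(l)}(x) → ∞ as n → ∞; (b) for every real x such that 0 < x ≤ ξ_k^{(l)} for some k ≥ 1, Q_n^{(l)}(x) → 0 as n → ∞. -/
/-!
Weighting the recurrence by `π` turns it into the flux identity
`λₙπₙ (Qₙ₊₁ - Qₙ) = π₀μ₀ - x ∑_{j ≤ n} πⱼQⱼ` (for the chain shifted by `l`).
For `x < 0` it forces `Qₙ ≥ 1`, hence `Qₙ ≥ 1 + |x| ∑_{m < n} Kₘ/(λₘπₘ) → ∞` because `C = ∞`.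

For `0 < x ≤ ξₖ`, the zeros of `Qₙ` from the `k`-th on stay above `x`. Every zero decreases in `n`,
so the set of zeros below `x` grows and eventually stabilizes; after that no zero can sit at `x`,
and `Qₙ(x)` has eventually constant sign, say positive. Once the flux is negative, `Qₙ(x)`
decreases, and it cannot stay above any `c > 0`: the identity would give
`Qₙ ≤ A + B ∑_{m < n} 1/(λₘπₘ) - xc ∑_{m < n} Kₘ/(λₘπₘ) → -∞` for constants `A`, `B`,
because `L < ∞` and `C = ∞`.
-/

open Filter Topology ENNReal Finset Polynomial

theorem neg_one_pow_card_filter_neg_mul_prod_pos {ι R : Type*} [CommRing R] [LinearOrder R]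
    [IsStrictOrderedRing R] [DecidableEq ι] {s : Finset ι} {f : ι → R}
    (hf : ∀ i ∈ s, f i ≠ 0) : 0 < (-1) ^ #{i ∈ s | f i < 0} * ∏ i ∈ s, f i := by
  induction s using Finset.induction_on with
  | empty => simp
  | insert a s ha ih =>
    have ih := ih fun i hi => hf i (mem_insert_of_mem hi)
    rw [prod_insert ha, filter_insert]
    rcases (hf a (mem_insert_self a s)).lt_or_gt with h | h
    · rw [if_pos h, card_insert_of_notMem fun h' => ha (mem_filter.1 h').1, pow_succ]
      convert mul_pos ih (neg_pos.2 h) using 1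
      ring
    · rw [if_neg h.not_gt]
      convert mul_pos ih h using 1
      ring

theorem Polynomial.eval_eq_leadingCoeff_mul_prod {ι : Type*} {P : ℝ[X]} {s : Finset ι}
    {w : ι → ℝ} (hP : P ≠ 0) (hdeg : P.natDegree ≤ #s) (hw : Set.InjOn w s)
    (hroot : ∀ i ∈ s, P.IsRoot (w i)) (x : ℝ) :
    P.eval x = P.leadingCoeff * ∏ i ∈ s, (x - w i) := by
  have hnodup : (s.val.map w).Nodup := s.nodup.map_on fun i hi j hj => hw hi hj
  have hle : s.val.map w ≤ P.roots := (Multiset.le_iff_subset hnodup).2 fun r hr => by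
    obtain ⟨i, hi, rfl⟩ := Multiset.mem_map.1 hr
    exact (mem_roots hP).2 (hroot i hi)
  have hroots : P.roots = s.val.map w :=
    (Multiset.eq_of_le_of_card_le hle (by simpa using (card_roots' P).trans hdeg)).symm
  have hcard : Multiset.card P.roots = P.natDegree :=
    (card_roots' P).antisymm (by simpa [hroots] using hdeg)
  conv_lhs => rw [← C_leadingCoeff_mul_prod_multiset_X_sub_C hcard]
  simp [hroots, Finset.prod_map_val, eval_prod]

theorem neg_one_pow_card_mul_eval_pos {ι : Type*} [DecidableEq ι] {P : ℝ[X]} {s : Finset ι}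
    {w : ι → ℝ} (hdeg : P.natDegree ≤ #s) (hw : Set.InjOn w s)
    (hroot : ∀ i ∈ s, P.IsRoot (w i)) (hw0 : ∀ i ∈ s, 0 < w i) (hP0 : 0 < P.eval 0) {x : ℝ}
    (hx : ∀ i ∈ s, w i ≠ x) : 0 < (-1) ^ #{i ∈ s | w i < x} * P.eval x := by
  have hP : P ≠ 0 := by rintro rfl; simp at hP0
  have hfilter : {i ∈ s | w i < x} = {i ∈ s | (x - w i) * (0 - w i) < 0} :=
    filter_congr fun i hi => by
      have := hw0 i hi
      constructor <;> intro h <;> nlinarith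
  have hsign := neg_one_pow_card_filter_neg_mul_prod_pos (s := s)
    (f := fun i => (x - w i) * (0 - w i)) fun i hi =>
      mul_ne_zero (sub_ne_zero.2 (hx i hi).symm) (by linarith [hw0 i hi])
  have hlc : 0 < P.leadingCoeff ^ 2 := by
    have := leadingCoeff_ne_zero.2 hP
    positivity
  have hprod : (-1) ^ #{i ∈ s | w i < x} * P.eval x * P.eval 0 = P.leadingCoeff ^ 2 *
      ((-1) ^ #{i ∈ s | (x - w i) * (0 - w i) < 0} * ∏ i ∈ s, (x - w i) * (0 - w i)) := by
    simp only [eval_eq_leadingCoeff_mul_prod hP hdeg hw hroot, prod_mul_distrib, hfilter]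
    ring
  exact (mul_pos_iff_of_pos_right hP0).1 (hprod ▸ mul_pos hlc hsign)

structure BirthDeathRecurrence (a b : ℕ → ℝ) (x : ℝ) (q : ℕ → ℝ) : Prop where
  zero : q 0 = 1
  one : a 0 * q 1 = a 0 + b 0 - x
  succ : ∀ n, a (n + 1) * q (n + 2) = (a (n + 1) + b (n + 1) - x) * q (n + 1) - b (n + 1) * q n

noncomputable def birthDeathPoly (a b : ℕ → ℝ) : ℕ → ℝ[X]
  | 0 => 1
  | 1 => C (a 0)⁻¹ * (C (a 0 + b 0) - X)
  | n + 2 => C (a (n + 1))⁻¹ * ((C (a (n + 1) + b (n + 1)) - X) * birthDeathPoly a b (n + 1)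
      - C (b (n + 1)) * birthDeathPoly a b n)

theorem natDegree_birthDeathPoly_le (a b : ℕ → ℝ) : ∀ n, (birthDeathPoly a b n).natDegree ≤ n
  | 0 => by simp [birthDeathPoly]
  | 1 => by
    rw [birthDeathPoly]
    refine (natDegree_C_mul_le _ _).trans ((natDegree_sub_le _ _).trans ?_)
    simp
  | n + 2 => by
    rw [birthDeathPoly]
    refine (natDegree_C_mul_le _ _).trans ((natDegree_sub_le _ _).trans (max_le ?_ ?_))
    · refine natDegree_mul_le.trans ?_
      have h1 : (C (a (n + 1) + b (n + 1)) - X).natDegree ≤ 1 :=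
        (natDegree_sub_le _ _).trans (by simp)
      have h2 := natDegree_birthDeathPoly_le a b (n + 1)
      omega
    · exact (natDegree_C_mul_le _ _).trans ((natDegree_birthDeathPoly_le a b n).trans (by omega))

namespace BirthDeathRecurrence

variable {a b p : ℕ → ℝ} {x : ℝ} {q : ℕ → ℝ}

theorem eq_eval_birthDeathPoly (h : BirthDeathRecurrence a b x q) (ha : ∀ n, a n ≠ 0) :
    ∀ n, q n = (birthDeathPoly a b n).eval x
  | 0 => by simp [birthDeathPoly, h.zero]
  | 1 => by
    have := ha 0
    simp only [birthDeathPoly, eval_mul, eval_C, eval_sub, eval_X]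
    field_simp
    linear_combination h.one
  | n + 2 => by
    have := ha (n + 1)
    simp only [birthDeathPoly, eval_mul, eval_C, eval_sub, eval_X,
      ← eq_eval_birthDeathPoly h ha n, ← eq_eval_birthDeathPoly h ha (n + 1)]
    field_simp
    linear_combination h.succ n

theorem flux_eq (h : BirthDeathRecurrence a b x q) (hp : ∀ n, p (n + 1) * b (n + 1) = p n * a n) :
    ∀ n, a n * p n * (q (n + 1) - q n) = p 0 * b 0 - x * ∑ j ∈ range (n + 1), p j * q j
  | 0 => by
    simp only [zero_add, sum_range_one, h.zero]
    linear_combination p 0 * h.one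
  | n + 1 => by
    rw [sum_range_succ]
    linear_combination p (n + 1) * h.succ n + flux_eq h hp n + (q (n + 1) - q n) * hp n

theorem sub_eq_div (h : BirthDeathRecurrence a b x q) (hp : ∀ n, p (n + 1) * b (n + 1) = p n * a n)
    (hw : ∀ n, a n * p n ≠ 0) (n : ℕ) :
    q (n + 1) - q n = (p 0 * b 0 - x * ∑ j ∈ range (n + 1), p j * q j) / (a n * p n) := by
  rw [eq_div_iff (hw n), mul_comm]
  exact h.flux_eq hp n

end BirthDeathRecurrence

theorem summable_of_tsum_ofReal_ne_top {f : ℕ → ℝ} (hf : ∀ n, 0 ≤ f n)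
    (h : ∑' n, ENNReal.ofReal (f n) ≠ ⊤) : Summable f := by
  simpa [ENNReal.toReal_ofReal (hf _)] using ENNReal.summable_toReal h

theorem not_summable_sum_div_shift {p w : ℕ → ℝ} (hw : Summable fun n => (w n)⁻¹)
    (hC : ¬ Summable fun n => (∑ j ∈ range (n + 1), p j) / w n) (l : ℕ) :
    ¬ Summable fun n => (∑ j ∈ range (n + 1), p (j + l)) / w (n + l) := by
  intro hs
  apply hC
  rw [← summable_nat_add_iff l]
  have hsplit : ∀ n, (∑ j ∈ range (n + l + 1), p j) / w (n + l)
      = (∑ j ∈ range (n + 1), p (j + l)) / w (n + l) + (∑ j ∈ range l, p j) * (w (n + l))⁻¹ := by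
    intro n
    rw [show n + l + 1 = l + (n + 1) by omega, sum_range_add, add_div]
    simp only [add_comm l]
    ring
  simp only [hsplit]
  exact hs.add (((summable_nat_add_iff l).2 hw).mul_left _)

section Flux

variable {p w q : ℕ → ℝ} {β x : ℝ}

theorem one_le_of_flux_of_nonpos (hp : ∀ n, 0 ≤ p n) (hw : ∀ n, 0 < w n) (hx : x ≤ 0)
    (hβ : 0 ≤ β) (hq0 : q 0 = 1)
    (hq : ∀ n, q (n + 1) - q n = (β - x * ∑ j ∈ range (n + 1), p j * q j) / w n) :
    ∀ n, 1 ≤ q n := by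
  intro n
  induction n using Nat.strong_induction_on with
  | _ n ih =>
    rcases n with _ | n
    · exact hq0.ge
    · have hS : 0 ≤ ∑ j ∈ range (n + 1), p j * q j := sum_nonneg fun j hj =>
        mul_nonneg (hp j) (zero_le_one.trans (ih j (by simpa [Nat.lt_succ_iff] using hj)))
      have hstep : 0 ≤ q (n + 1) - q n := hq n ▸ div_nonneg (by nlinarith) (hw n).le
      linarith [ih n n.lt_succ_self]

theorem tendsto_atTop_of_flux_of_neg (hp : ∀ n, 0 ≤ p n) (hw : ∀ n, 0 < w n) (hx : x < 0)
    (hβ : 0 ≤ β) (hq0 : q 0 = 1)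
    (hq : ∀ n, q (n + 1) - q n = (β - x * ∑ j ∈ range (n + 1), p j * q j) / w n)
    (hC : ¬ Summable fun n => (∑ j ∈ range (n + 1), p j) / w n) :
    Tendsto q atTop atTop := by
  have hq1 := one_le_of_flux_of_nonpos hp hw hx.le hβ hq0 hq
  have hG := (not_summable_iff_tendsto_nat_atTop_of_nonneg fun n =>
    div_nonneg (sum_nonneg fun j _ => hp j) (hw n).le).1 hC
  refine tendsto_atTop_mono (fun n => ?_)
    (tendsto_atTop_add_const_left _ 1 (hG.const_mul_atTop (neg_pos.2 hx)))
  have hstep : ∀ m ∈ range n, -x * ((∑ j ∈ range (m + 1), p j) / w m) ≤ q (m + 1) - q m := by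
    intro m _
    rw [hq m, mul_div_assoc']
    refine div_le_div_of_nonneg_right ?_ (hw m).le
    have : ∑ j ∈ range (m + 1), p j ≤ ∑ j ∈ range (m + 1), p j * q j :=
      sum_le_sum fun j _ => le_mul_of_one_le_right (hp j) (hq1 j)
    nlinarith
  have := sum_le_sum hstep
  rw [← mul_sum, sum_range_sub, hq0] at this
  linarith

theorem exists_lt_of_flux_of_pos (hp : ∀ n, 0 ≤ p n) (hw : ∀ n, 0 < w n) (hx : 0 < x)
    (hq : ∀ n, q (n + 1) - q n = (β - x * ∑ j ∈ range (n + 1), p j * q j) / w n)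
    (hL : Summable fun n => (w n)⁻¹)
    (hC : ¬ Summable fun n => (∑ j ∈ range (n + 1), p j) / w n)
    {c : ℝ} (hc : 0 < c) (M : ℕ) : ∃ n ≥ M, q n < c := by
  by_contra! hqc
  set S : ℕ → ℝ := fun n => ∑ j ∈ range (n + 1), p j * q j
  set K : ℕ → ℝ := fun n => ∑ j ∈ range (n + 1), p j
  set G : ℕ → ℝ := fun n => ∑ m ∈ range n, K m / w m
  set H : ℕ → ℝ := fun n => ∑ m ∈ range n, (w m)⁻¹
  have hS : ∀ n ≥ M, S M + c * (K n - K M) ≤ S n := by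
    refine Nat.le_induction (by simp) fun n hn ih => ?_
    simp only [S, K, sum_range_succ] at ih ⊢
    nlinarith [hp (n + 1), hqc (n + 1) (by omega)]
  -- `γ` collects the terms of the flux that do not grow with `n`
  set γ := β - x * S M + x * c * K M
  have hF : ∀ n ≥ M, q n + x * c * G n - γ * H n ≤ q M + x * c * G M - γ * H M := by
    refine Nat.le_induction le_rfl fun n hn ih => ?_
    have hdiff : q (n + 1) - q n ≤ (γ - x * c * K n) / w n := by
      rw [hq n]
      refine div_le_div_of_nonneg_right ?_ (hw n).le
      nlinarith [hS n hn]
    have hGsucc : G (n + 1) = G n + K n / w n := sum_range_succ _ _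
    have hHsucc : H (n + 1) = H n + (w n)⁻¹ := sum_range_succ _ _
    rw [sub_div, mul_div_assoc, div_eq_mul_inv γ] at hdiff
    rw [hGsucc, hHsucc]
    linarith
  have hG := (not_summable_iff_tendsto_nat_atTop_of_nonneg fun n =>
    div_nonneg (sum_nonneg fun j _ => hp j) (hw n).le).1 hC
  have htop : Tendsto (fun n => x * c * G n + -(γ * H n)) atTop atTop :=
    (hG.const_mul_atTop (mul_pos hx hc)).atTop_add (hL.hasSum.tendsto_sum_nat.const_mul γ).neg
  obtain ⟨n, hbig, hn⟩ := ((htop.eventually_gt_atTop (q M + x * c * G M - γ * H M - c)).and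
    (eventually_ge_atTop M)).exists
  linarith [hF n hn, hqc n hn]

theorem tendsto_zero_of_flux_of_eventually_pos (hp : ∀ n, 0 ≤ p n) (hw : ∀ n, 0 < w n)
    (hx : 0 < x) (hq : ∀ n, q (n + 1) - q n = (β - x * ∑ j ∈ range (n + 1), p j * q j) / w n)
    (hL : Summable fun n => (w n)⁻¹)
    (hC : ¬ Summable fun n => (∑ j ∈ range (n + 1), p j) / w n)
    (hpos : ∀ᶠ n in atTop, 0 < q n) : Tendsto q atTop (𝓝 0) := by
  obtain ⟨N, hN⟩ := eventually_atTop.1 hpos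
  set S : ℕ → ℝ := fun n => ∑ j ∈ range (n + 1), p j * q j
  have hS : MonotoneOn S (Set.Ici N) :=
    monotoneOn_of_le_succ Set.ordConnected_Ici fun n _ hn _ => by
      simp only [S, Order.succ_eq_add_one, sum_range_succ _ (n + 1)]
      nlinarith [hp (n + 1), hN (n + 1) (Nat.le_succ_of_le hn)]
  -- once the flux `β - x S n` turns negative, it stays negative and `q` decreases
  obtain ⟨M, hNM, hM⟩ : ∃ M ≥ N, β < x * S M := by
    by_contra! hflux
    have hmono : MonotoneOn q (Set.Ici N) := monotoneOn_of_le_succ Set.ordConnected_Ici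
      fun n _ hn _ => sub_nonneg.1 <| hq n ▸ div_nonneg (by linarith [hflux n hn]) (hw n).le
    obtain ⟨n, hn, hlt⟩ := exists_lt_of_flux_of_pos hp hw hx hq hL hC (hN N le_rfl) N
    exact hlt.not_ge (hmono Set.self_mem_Ici hn hn)
  have hanti : AntitoneOn q (Set.Ici M) := antitoneOn_of_succ_le Set.ordConnected_Ici
    fun n _ hn _ => sub_nonpos.1 <| hq n ▸ div_nonpos_of_nonpos_of_nonneg
      (by nlinarith [hS (Set.mem_Ici.2 hNM) (Set.mem_Ici.2 (hNM.trans hn)) hn]) (hw n).le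
  refine tendsto_order.2 ⟨fun a ha => ?_, fun a ha => ?_⟩
  · exact (eventually_ge_atTop N).mono fun n hn => ha.trans (hN n hn)
  · obtain ⟨n, hn, hlt⟩ := exists_lt_of_flux_of_pos hp hw hx hq hL hC ha M
    exact (eventually_ge_atTop n).mono fun m hm =>
      (hanti (Set.mem_Ici.2 hn) (Set.mem_Ici.2 (hn.trans hm)) hm).trans_lt hlt

theorem tendsto_zero_of_flux_of_eventually_sign (hp : ∀ n, 0 ≤ p n) (hw : ∀ n, 0 < w n)
    (hx : 0 < x) (hq : ∀ n, q (n + 1) - q n = (β - x * ∑ j ∈ range (n + 1), p j * q j) / w n)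
    (hL : Summable fun n => (w n)⁻¹)
    (hC : ¬ Summable fun n => (∑ j ∈ range (n + 1), p j) / w n)
    {ε : ℝ} (hε : ε ≠ 0) (hpos : ∀ᶠ n in atTop, 0 < ε * q n) : Tendsto q atTop (𝓝 0) := by
  have hεq : ∀ n, ε * q (n + 1) - ε * q n
      = (ε * β - x * ∑ j ∈ range (n + 1), p j * (ε * q j)) / w n := by
    intro n
    simp only [← mul_sub, hq n, mul_left_comm _ ε, ← mul_sum]
    ring
  have := (tendsto_zero_of_flux_of_eventually_pos hp hw hx hεq hL hC hpos).const_mul ε⁻¹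
  simpa [inv_mul_cancel_left₀ hε] using this

end Flux

theorem Finset.exists_eventually_eq_of_monotone {α : Type*} {S : ℕ → Finset α} {T : Finset α}
    (hS : Monotone S) (hT : ∀ n, S n ⊆ T) : ∃ U, ∀ᶠ n in atTop, S n = U := by
  have hcard := tendsto_atTop_ciSup (fun _ _ h => card_le_card (hS h))
    ⟨#T, Set.forall_mem_range.2 fun n => card_le_card (hT n)⟩
  rw [nhds_discrete, tendsto_pure] at hcard
  obtain ⟨N, hN⟩ := eventually_atTop.1 hcard
  exact ⟨S N, eventually_atTop.2 ⟨N, fun n hn =>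
    (eq_of_subset_of_card_le (hS hn) (by rw [hN n hn, hN N le_rfl])).symm⟩⟩

theorem strictMonoOn_Icc_of_lt_add_one {f : ℕ → ℝ} {n : ℕ}
    (hf : ∀ i, 1 ≤ i → i + 1 ≤ n → f i < f (i + 1)) : StrictMonoOn f (Set.Icc 1 n) :=
  strictMonoOn_of_lt_succ Set.ordConnected_Icc fun i _ hi hsi => by
    simp only [Order.succ_eq_add_one, Set.mem_Icc] at hi hsi
    exact hf i hi.1 hsi.2

section Zeros

variable {z : ℕ → ℕ → ℝ} {x : ℝ}

noncomputable def zerosBelow (z : ℕ → ℕ → ℝ) (x : ℝ) (n : ℕ) : Finset ℕ := {i ∈ Icc 1 n | z n i < x}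

theorem monotone_zerosBelow (hsep : ∀ n i, 1 ≤ i → i ≤ n → z (n + 1) i < z n i) :
    Monotone (zerosBelow z x) :=
  monotone_nat_of_le_succ fun n i hi => by
    simp only [zerosBelow, mem_filter, mem_Icc] at hi ⊢
    exact ⟨⟨hi.1.1, by omega⟩, (hsep n i hi.1.1 hi.1.2).trans hi.2⟩

theorem zerosBelow_subset_Ico {k : ℕ} (hk : ∀ n i, k ≤ i → i ≤ n → x < z n i) (n : ℕ) :
    zerosBelow z x n ⊆ Ico 1 k := fun i hi => by
  simp only [zerosBelow, mem_filter, mem_Icc] at hi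
  exact mem_Ico.2 ⟨hi.1.1, lt_of_not_ge fun hki => (hk n i hki hi.1.2).not_gt hi.2⟩

/-- A zero at `x` would change the set of zeros below `x` between steps `n - 1` and `n + 1`. -/
theorem eventually_ne_of_zerosBelow_eq (hsep : ∀ n i, 1 ≤ i → i ≤ n → z (n + 1) i < z n i)
    {T : Finset ℕ} (hT : ∀ᶠ n in atTop, zerosBelow z x n = T) :
    ∀ᶠ n in atTop, ∀ i ∈ Icc 1 n, z n i ≠ x := by
  obtain ⟨N, hN⟩ := eventually_atTop.1 hT
  refine eventually_atTop.2 ⟨N + 1, fun n hn i hi hzx => ?_⟩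
  obtain ⟨m, rfl⟩ : ∃ m, n = m + 1 := ⟨n - 1, by omega⟩
  have hi' := mem_Icc.1 hi
  have hnext : i ∈ zerosBelow z x (m + 1 + 1) := mem_filter.2
    ⟨mem_Icc.2 ⟨hi'.1, by omega⟩, hzx ▸ hsep _ i hi'.1 hi'.2⟩
  rw [hN _ (by omega), ← hN m (by omega)] at hnext
  obtain ⟨hi'', hlt⟩ := mem_filter.1 hnext
  rw [← hzx] at hlt
  exact (hsep m i hi'.1 (mem_Icc.1 hi'').2).not_gt hlt

theorem lt_of_le_limit_of_interlacing (hsep : ∀ n i, 1 ≤ i → i ≤ n → z (n + 1) i < z n i)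
    (hzlt : ∀ n i, 1 ≤ i → i + 1 ≤ n → z n i < z n (i + 1)) {k : ℕ} (hk : 1 ≤ k) {ξ : ℝ}
    (hlim : Tendsto (fun n => z n k) atTop (𝓝 ξ)) (hx : x ≤ ξ) :
    ∀ n i, k ≤ i → i ≤ n → x < z n i := by
  intro n i hki hin
  have hanti : StrictAntiOn (fun m => z m k) (Set.Ici k) :=
    strictAntiOn_of_succ_lt Set.ordConnected_Ici fun m _ hm _ => hsep m k hk hm
  have hξ : ξ ≤ z (n + 1) k := le_of_tendsto hlim <| eventually_atTop.2
    ⟨n + 1, fun m hm => hanti.antitoneOn (Set.mem_Ici.2 (by omega)) (Set.mem_Ici.2 (by omega)) hm⟩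
  calc x ≤ z (n + 1) k := hx.trans hξ
    _ < z n k := hsep n k hk (hki.trans hin)
    _ ≤ z n i := (strictMonoOn_Icc_of_lt_add_one (hzlt n)).monotoneOn
        ⟨hk, hki.trans hin⟩ ⟨hk.trans hki, hin⟩ hki

theorem exists_eventually_neg_one_pow_mul_eval_pos {P : ℕ → ℝ[X]}
    (hdeg : ∀ n, (P n).natDegree ≤ n) (hP0 : ∀ n, 0 < (P n).eval 0)
    (hroot : ∀ n i, 1 ≤ i → i ≤ n → (P n).IsRoot (z n i))
    (hzpos : ∀ n i, 1 ≤ i → i ≤ n → 0 < z n i)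
    (hzlt : ∀ n i, 1 ≤ i → i + 1 ≤ n → z n i < z n (i + 1))
    (hsep : ∀ n i, 1 ≤ i → i ≤ n → z (n + 1) i < z n i) {k : ℕ}
    (hk : ∀ n i, k ≤ i → i ≤ n → x < z n i) :
    ∃ v : ℕ, ∀ᶠ n in atTop, 0 < (-1) ^ v * (P n).eval x := by
  obtain ⟨T, hT⟩ := exists_eventually_eq_of_monotone (monotone_zerosBelow hsep)
    (zerosBelow_subset_Ico hk)
  refine ⟨#T, ?_⟩
  filter_upwards [hT, eventually_ne_of_zerosBelow_eq hsep hT] with n hn hne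
  rw [← hn]
  refine neg_one_pow_card_mul_eval_pos (by simpa using hdeg n) ?_
    (fun i hi => hroot n i (mem_Icc.1 hi).1 (mem_Icc.1 hi).2)
    (fun i hi => hzpos n i (mem_Icc.1 hi).1 (mem_Icc.1 hi).2) (hP0 n) hne
  rw [coe_Icc]
  exact (strictMonoOn_Icc_of_lt_add_one (hzlt n)).injOn

end Zeros

namespace BirthDeathRecurrence

variable {a b p q : ℕ → ℝ} {x : ℝ}

theorem one_le (h : BirthDeathRecurrence a b x q) (ha : ∀ n, 0 < a n) (hb0 : 0 ≤ b 0)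
    (hp : ∀ n, 0 < p n) (hpab : ∀ n, p (n + 1) * b (n + 1) = p n * a n) (hx : x ≤ 0) (n : ℕ) :
    1 ≤ q n :=
  one_le_of_flux_of_nonpos (fun n => (hp n).le) (fun n => mul_pos (ha n) (hp n)) hx
    (mul_nonneg (hp 0).le hb0) h.zero (h.sub_eq_div hpab fun n => (mul_pos (ha n) (hp n)).ne') n

theorem tendsto_atTop (h : BirthDeathRecurrence a b x q) (ha : ∀ n, 0 < a n) (hb0 : 0 ≤ b 0)
    (hp : ∀ n, 0 < p n) (hpab : ∀ n, p (n + 1) * b (n + 1) = p n * a n)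
    (hC : ¬ Summable fun n => (∑ j ∈ range (n + 1), p j) / (a n * p n)) (hx : x < 0) :
    Tendsto q atTop atTop :=
  tendsto_atTop_of_flux_of_neg (fun n => (hp n).le) (fun n => mul_pos (ha n) (hp n)) hx
    (mul_nonneg (hp 0).le hb0) h.zero (h.sub_eq_div hpab fun n => (mul_pos (ha n) (hp n)).ne') hC

end BirthDeathRecurrence

theorem tendsto_zero_of_interlacing {a b p : ℕ → ℝ} {Q : ℕ → ℝ → ℝ}
    (hQ : ∀ x, BirthDeathRecurrence a b x fun n => Q n x) (ha : ∀ n, 0 < a n) (hb0 : 0 ≤ b 0)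
    (hp : ∀ n, 0 < p n) (hpab : ∀ n, p (n + 1) * b (n + 1) = p n * a n)
    (hL : Summable fun n => (a n * p n)⁻¹)
    (hC : ¬ Summable fun n => (∑ j ∈ range (n + 1), p j) / (a n * p n)) {z : ℕ → ℕ → ℝ}
    (hzpos : ∀ n i, 1 ≤ i → i ≤ n → 0 < z n i)
    (hzlt : ∀ n i, 1 ≤ i → i + 1 ≤ n → z n i < z n (i + 1))
    (hzero : ∀ n i, 1 ≤ i → i ≤ n → Q n (z n i) = 0)
    (hsep : ∀ n i, 1 ≤ i → i ≤ n → z (n + 1) i < z n i) {k : ℕ} (hk : 1 ≤ k) {ξ : ℝ}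
    (hlim : Tendsto (fun n => z n k) atTop (𝓝 ξ)) {x : ℝ} (hx : 0 < x) (hxξ : x ≤ ξ) :
    Tendsto (fun n => Q n x) atTop (𝓝 0) := by
  have heval x := (hQ x).eq_eval_birthDeathPoly fun n => (ha n).ne'
  obtain ⟨v, hv⟩ := exists_eventually_neg_one_pow_mul_eval_pos (natDegree_birthDeathPoly_le a b)
    (fun n => heval 0 n ▸ one_pos.trans_le ((hQ 0).one_le ha hb0 hp hpab le_rfl n))
    (fun n i h1 h2 => by rw [IsRoot, ← heval]; exact hzero n i h1 h2) hzpos hzlt hsep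
    (lt_of_le_limit_of_interlacing hsep hzlt hk hlim hxξ)
  exact tendsto_zero_of_flux_of_eventually_sign (fun n => (hp n).le)
    (fun n => mul_pos (ha n) (hp n)) hx
    ((hQ x).sub_eq_div hpab fun n => (mul_pos (ha n) (hp n)).ne') hL hC
    (pow_ne_zero v (by norm_num : (-1 : ℝ) ≠ 0)) (hv.mono fun n hn => by rwa [← heval] at hn)

theorem stmt7_general
    (lam mu : ℕ → ℝ) (pi : ℕ → ℝ)
    (hlam : ∀ n, 0 < lam n) (hmu0 : 0 ≤ mu 0) (hmu : ∀ n, 1 ≤ n → 0 < mu n)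
    (hpi0 : pi 0 = 1) (hpi : ∀ n, pi (n + 1) = pi n * lam n / mu (n + 1))
    (K : ℕ → ℝ≥0∞) (hK : ∀ n, K n = ∑ i ∈ Finset.range (n + 1), ENNReal.ofReal (pi i))
    (Linf C : ℝ≥0∞)
    (hLinf : Linf = ∑' i, ENNReal.ofReal (1 / (lam i * pi i)))
    (hC : C = ∑' n, ENNReal.ofReal (1 / (lam n * pi n)) * K n)
    (Q : ℕ → ℕ → ℝ → ℝ)
    (hQ0 : ∀ l x, Q l 0 x = 1)
    (hQ1 : ∀ l x, lam l * Q l 1 x = lam l + mu l - x)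
    (hQrec : ∀ l n x, lam (n + 1 + l) * Q l (n + 2) x
      = (lam (n + 1 + l) + mu (n + 1 + l) - x) * Q l (n + 1) x - mu (n + 1 + l) * Q l n x)
    (z : ℕ → ℕ → ℕ → ℝ) (xi : ℕ → ℕ → ℝ)
    (hzpos : ∀ l n i, 1 ≤ i → i ≤ n → 0 < z l n i)
    (hzlt : ∀ l n i, 1 ≤ i → i + 1 ≤ n → z l n i < z l n (i + 1))
    (hzero : ∀ l n i, 1 ≤ i → i ≤ n → Q l n (z l n i) = 0)
    (hsep1 : ∀ l n i, 1 ≤ i → i ≤ n → z l (n + 1) i < z l n i)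
    (hxi : ∀ l i, 1 ≤ i → Tendsto (fun n => z l n i) atTop (nhds (xi l i)))
    (hLfin : Linf ≠ ⊤) (hCtop : C = ⊤) :
    ∀ l, (∀ x : ℝ, x < 0 → Tendsto (fun n => Q l n x) atTop atTop) ∧
      (∀ x : ℝ, 0 < x → (∃ k, 1 ≤ k ∧ x ≤ xi l k) →
        Tendsto (fun n => Q l n x) atTop (nhds 0)) := by
  intro l
  have hpi_pos : ∀ n, 0 < pi n := by
    intro n
    induction n with
    | zero => simp [hpi0]
    | succ n ih => rw [hpi]; exact div_pos (mul_pos ih (hlam n)) (hmu _ n.succ_pos)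
  have hw : ∀ n, 0 < lam n * pi n := fun n => mul_pos (hlam n) (hpi_pos n)
  have hL : Summable fun n => (lam n * pi n)⁻¹ := by
    simpa using summable_of_tsum_ofReal_ne_top (fun n => (one_div_pos.2 (hw n)).le)
      (hLinf ▸ hLfin)
  have hC' : ¬ Summable fun n => (∑ j ∈ range (n + 1), pi j) / (lam n * pi n) := by
    refine fun hs => hs.tsum_ofReal_ne_top ?_
    rw [← hCtop, hC]
    congr with n
    rw [hK, ← ofReal_sum_of_nonneg fun i _ => (hpi_pos i).le,
      ← ofReal_mul (one_div_pos.2 (hw n)).le, one_div_mul_eq_div]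
  have hQl : ∀ x, BirthDeathRecurrence (fun n => lam (n + l)) (fun n => mu (n + l)) x
      (fun n => Q l n x) := fun x => ⟨hQ0 l x, by simpa using hQ1 l x, fun n => hQrec l n x⟩
  have hpmu : ∀ n, pi (n + 1 + l) * mu (n + 1 + l) = pi (n + l) * lam (n + l) := fun n => by
    rw [show n + 1 + l = n + l + 1 by omega, hpi, div_mul_cancel₀ _ (hmu _ (by omega)).ne']
  have hmul : 0 ≤ mu (0 + l) := by
    rcases l with _ | l
    exacts [hmu0, (hmu _ (by omega)).le]
  refine ⟨fun x hx => (hQl x).tendsto_atTop (fun n => hlam _) hmul (fun n => hpi_pos _) hpmu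
    (not_summable_sum_div_shift hL hC' l) hx, fun x hx ⟨k, hk, hxk⟩ => ?_⟩
  exact tendsto_zero_of_interlacing hQl (fun n => hlam _) hmul (fun n => hpi_pos _) hpmu
    ((summable_nat_add_iff l).2 hL) (not_summable_sum_div_shift hL hC' l) (hzpos l) (hzlt l)
    (hzero l) (hsep1 l) hk (hxi l k hk) hx hxk

theorem stmt7
    (lam mu : ℕ → ℝ) (pi : ℕ → ℝ)
    (hlam : ∀ n, 0 < lam n) (hmu0 : 0 ≤ mu 0) (hmu : ∀ n, 1 ≤ n → 0 < mu n)
    (hpi0 : pi 0 = 1) (hpi : ∀ n, pi (n + 1) = pi n * lam n / mu (n + 1))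
    (K : ℕ → ℝ≥0∞) (hK : ∀ n, K n = ∑ i ∈ Finset.range (n + 1), ENNReal.ofReal (pi i))
    (Kinf Linf C D : ℝ≥0∞)
    (hKinf : Kinf = ∑' i, ENNReal.ofReal (pi i))
    (hLinf : Linf = ∑' i, ENNReal.ofReal (1 / (lam i * pi i)))
    (hC : C = ∑' n, ENNReal.ofReal (1 / (lam n * pi n)) * K n)
    (hD : D = ∑' n, ENNReal.ofReal (1 / (lam n * pi n)) * (Kinf - K n))
    (Q : ℕ → ℕ → ℝ → ℝ)
    (hQ0 : ∀ l x, Q l 0 x = 1)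
    (hQ1 : ∀ l x, lam l * Q l 1 x = lam l + mu l - x)
    (hQrec : ∀ l n x, lam (n + 1 + l) * Q l (n + 2) x
      = (lam (n + 1 + l) + mu (n + 1 + l) - x) * Q l (n + 1) x - mu (n + 1 + l) * Q l n x)
    (z : ℕ → ℕ → ℕ → ℝ) (xi : ℕ → ℕ → ℝ)
    (hzpos : ∀ l n i, 1 ≤ i → i ≤ n → 0 < z l n i)
    (hzlt : ∀ l n i, 1 ≤ i → i + 1 ≤ n → z l n i < z l n (i + 1))
    (hzero : ∀ l n i, 1 ≤ i → i ≤ n → Q l n (z l n i) = 0)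
    (hzall : ∀ l n, 1 ≤ n → ∀ y, Q l n y = 0 → ∃ i, 1 ≤ i ∧ i ≤ n ∧ y = z l n i)
    (hsep1 : ∀ l n i, 1 ≤ i → i ≤ n → z l (n + 1) i < z l n i)
    (hsep2 : ∀ l n i, 1 ≤ i → i ≤ n → z l n i < z l (n + 1) (i + 1))
    (hxi : ∀ l i, 1 ≤ i → Tendsto (fun n => z l n i) atTop (nhds (xi l i)))
    (hKtop : Kinf = ⊤) (hLfin : Linf ≠ ⊤) (hCtop : C = ⊤) :
    ∀ l, (∀ x : ℝ, x < 0 → Tendsto (fun n => Q l n x) atTop atTop) ∧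
      (∀ x : ℝ, 0 < x → (∃ k, 1 ≤ k ∧ x ≤ xi l k) →
        Tendsto (fun n => Q l n x) atTop (nhds 0)) :=
  stmt7_general lam mu pi hlam hmu0 hmu hpi0 hpi K hK Linf C hLinf hC Q hQ0 hQ1 hQrec z xi hzpos
    hzlt hzero hsep1 hxi hLfin hCtop
end

section
/- (Proposition 3(i)) Suppose K_∞ < ∞ and L_∞ = ∞. Then C = ∞ and, for every l ≥ 1, and also for l = 0 provided μ_0 > 0, lim_{n→∞} Q_n^{(l)}(0) = ∞. -/
/-!
Since `K n ≥ π₀ = 1`, the series for `C` dominates the one for `L_∞`, so `C = ∞`.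
At `x = 0` the three-term recurrence together with the detailed balance relation
`μ_{m+1} π_{m+1} = λ_m π_m` shows that `λ_{n+l} π_{n+l} (Q_{n+1}^{(l)}(0) - Q_n^{(l)}(0))`
does not depend on `n`; it equals `μ_l π_l`. Hence
`Q_n^{(l)}(0) = 1 + μ_l π_l ∑_{k<n} (λ_{k+l} π_{k+l})⁻¹`, which tends to `∞` when `μ_l > 0`
and `L_∞ = ∞`.
-/

open Filter ENNReal

theorem ENNReal.tsum_mul_eq_top_of_one_le {α : Type*} {a b : α → ℝ≥0∞}
    (ha : ∑' i, a i = ⊤) (hb : ∀ i, 1 ≤ b i) : ∑' i, a i * b i = ⊤ :=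
  eq_top_iff.mpr <| ha ▸ ENNReal.tsum_le_tsum fun i => le_mul_of_one_le_right zero_le (hb i)

theorem not_summable_of_tsum_ofReal_eq_top {α : Type*} {f : α → ℝ} (hf : ∀ i, 0 ≤ f i)
    (h : ∑' i, ENNReal.ofReal (f i) = ⊤) : ¬ Summable f := fun hs =>
  ENNReal.ofReal_ne_top (h ▸ ENNReal.ofReal_tsum_of_nonneg hf hs)

section BirthDeath

variable {lam mu pi : ℕ → ℝ}

theorem pi_pos (hlam : ∀ n, 0 < lam n) (hmu : ∀ n, 1 ≤ n → 0 < mu n) (hpi0 : pi 0 = 1)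
    (hpi : ∀ n, pi (n + 1) = pi n * lam n / mu (n + 1)) (n : ℕ) : 0 < pi n := by
  induction n with
  | zero => rw [hpi0]; exact one_pos
  | succ n ih => rw [hpi n]; exact div_pos (mul_pos ih (hlam n)) (hmu (n + 1) n.succ_pos)

theorem mu_mul_pi_succ (hmu : ∀ n, 1 ≤ n → 0 < mu n)
    (hpi : ∀ n, pi (n + 1) = pi n * lam n / mu (n + 1)) (n : ℕ) :
    mu (n + 1) * pi (n + 1) = lam n * pi n := by
  rw [hpi n, mul_div_cancel₀ _ (hmu (n + 1) n.succ_pos).ne', mul_comm]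

variable {Q : ℕ → ℕ → ℝ → ℝ}

theorem lam_mul_pi_mul_sub_Q_zero (hmu : ∀ n, 1 ≤ n → 0 < mu n)
    (hpi : ∀ n, pi (n + 1) = pi n * lam n / mu (n + 1))
    (hQ0 : ∀ l x, Q l 0 x = 1)
    (hQ1 : ∀ l x, lam l * Q l 1 x = lam l + mu l - x)
    (hQrec : ∀ l n x, lam (n + 1 + l) * Q l (n + 2) x
      = (lam (n + 1 + l) + mu (n + 1 + l) - x) * Q l (n + 1) x - mu (n + 1 + l) * Q l n x)
    (l n : ℕ) : lam (n + l) * pi (n + l) * (Q l (n + 1) 0 - Q l n 0) = mu l * pi l := by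
  induction n with
  | zero =>
    rw [zero_add, hQ0]
    linear_combination pi l * hQ1 l 0
  | succ n ih =>
    have hrec := hQrec l n 0
    have hbalance := mu_mul_pi_succ hmu hpi (n + l)
    rw [show n + 1 + l = n + l + 1 by ring] at hrec ⊢
    linear_combination pi (n + l + 1) * hrec + (Q l (n + 1) 0 - Q l n 0) * hbalance + ih

theorem Q_zero_eq_one_add_mul_sum (hlam : ∀ n, 0 < lam n) (hmu : ∀ n, 1 ≤ n → 0 < mu n)
    (hpi0 : pi 0 = 1) (hpi : ∀ n, pi (n + 1) = pi n * lam n / mu (n + 1))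
    (hQ0 : ∀ l x, Q l 0 x = 1)
    (hQ1 : ∀ l x, lam l * Q l 1 x = lam l + mu l - x)
    (hQrec : ∀ l n x, lam (n + 1 + l) * Q l (n + 2) x
      = (lam (n + 1 + l) + mu (n + 1 + l) - x) * Q l (n + 1) x - mu (n + 1 + l) * Q l n x)
    (l n : ℕ) :
    Q l n 0 = 1 + mu l * pi l * ∑ k ∈ Finset.range n, 1 / (lam (k + l) * pi (k + l)) := by
  induction n with
  | zero => simp [hQ0]
  | succ n ih =>
    have hstep := lam_mul_pi_mul_sub_Q_zero hmu hpi hQ0 hQ1 hQrec l n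
    have hpos : lam (n + l) * pi (n + l) ≠ 0 :=
      (mul_pos (hlam _) (pi_pos hlam hmu hpi0 hpi _)).ne'
    rw [Finset.sum_range_succ, mul_add, ← add_assoc, ← ih, mul_one_div, ← hstep,
      mul_div_cancel_left₀ _ hpos]
    ring

theorem tendsto_Q_zero_atTop (hlam : ∀ n, 0 < lam n) (hmu : ∀ n, 1 ≤ n → 0 < mu n)
    (hpi0 : pi 0 = 1) (hpi : ∀ n, pi (n + 1) = pi n * lam n / mu (n + 1))
    (hQ0 : ∀ l x, Q l 0 x = 1)
    (hQ1 : ∀ l x, lam l * Q l 1 x = lam l + mu l - x)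
    (hQrec : ∀ l n x, lam (n + 1 + l) * Q l (n + 2) x
      = (lam (n + 1 + l) + mu (n + 1 + l) - x) * Q l (n + 1) x - mu (n + 1 + l) * Q l n x)
    (hL : ¬ Summable fun n => 1 / (lam n * pi n)) {l : ℕ} (hl : 0 < mu l) :
    Tendsto (fun n => Q l n 0) atTop atTop := by
  have hpos := pi_pos hlam hmu hpi0 hpi
  have hsum : Tendsto (fun n => ∑ k ∈ Finset.range n, 1 / (lam (k + l) * pi (k + l)))
      atTop atTop :=
    (not_summable_iff_tendsto_nat_atTop_of_nonneg fun k =>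
      (one_div_pos.mpr (mul_pos (hlam _) (hpos _))).le).mp
      ((summable_nat_add_iff l).not.mpr hL)
  exact (tendsto_atTop_add_const_left _ 1 (hsum.const_mul_atTop (mul_pos hl (hpos l)))).congr
    fun n => (Q_zero_eq_one_add_mul_sum hlam hmu hpi0 hpi hQ0 hQ1 hQrec l n).symm

end BirthDeath

theorem stmt9_general
    (lam mu : ℕ → ℝ) (pi : ℕ → ℝ)
    (hlam : ∀ n, 0 < lam n) (hmu : ∀ n, 1 ≤ n → 0 < mu n)
    (hpi0 : pi 0 = 1) (hpi : ∀ n, pi (n + 1) = pi n * lam n / mu (n + 1))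
    (K : ℕ → ℝ≥0∞) (hK : ∀ n, K n = ∑ i ∈ Finset.range (n + 1), ENNReal.ofReal (pi i))
    (Linf C : ℝ≥0∞)
    (hLinf : Linf = ∑' i, ENNReal.ofReal (1 / (lam i * pi i)))
    (hC : C = ∑' n, ENNReal.ofReal (1 / (lam n * pi n)) * K n)
    (Q : ℕ → ℕ → ℝ → ℝ)
    (hQ0 : ∀ l x, Q l 0 x = 1)
    (hQ1 : ∀ l x, lam l * Q l 1 x = lam l + mu l - x)
    (hQrec : ∀ l n x, lam (n + 1 + l) * Q l (n + 2) x
      = (lam (n + 1 + l) + mu (n + 1 + l) - x) * Q l (n + 1) x - mu (n + 1 + l) * Q l n x)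
    (hLtop : Linf = ⊤) :
    C = ⊤ ∧ (∀ l, 1 ≤ l → Tendsto (fun n => Q l n 0) atTop atTop) ∧
      (0 < mu 0 → Tendsto (fun n => Q 0 n 0) atTop atTop) := by
  have hLsum : ∑' i, ENNReal.ofReal (1 / (lam i * pi i)) = ⊤ := hLinf ▸ hLtop
  have hK1 (n : ℕ) : 1 ≤ K n := by
    rw [hK, ← ENNReal.ofReal_one, ← hpi0]
    exact Finset.single_le_sum (f := fun i => ENNReal.ofReal (pi i)) (fun _ _ => zero_le)
      (Finset.mem_range.mpr n.succ_pos)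
  have hL : ¬ Summable fun n => 1 / (lam n * pi n) :=
    not_summable_of_tsum_ofReal_eq_top
      (fun n => (one_div_pos.mpr (mul_pos (hlam n) (pi_pos hlam hmu hpi0 hpi n))).le) hLsum
  have hQ {l : ℕ} (hl : 0 < mu l) := tendsto_Q_zero_atTop hlam hmu hpi0 hpi hQ0 hQ1 hQrec hL hl
  exact ⟨hC ▸ ENNReal.tsum_mul_eq_top_of_one_le hLsum hK1, fun l hl => hQ (hmu l hl), hQ⟩

theorem stmt9
    (lam mu : ℕ → ℝ) (pi : ℕ → ℝ)
    (hlam : ∀ n, 0 < lam n) (hmu0 : 0 ≤ mu 0) (hmu : ∀ n, 1 ≤ n → 0 < mu n)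
    (hpi0 : pi 0 = 1) (hpi : ∀ n, pi (n + 1) = pi n * lam n / mu (n + 1))
    (K : ℕ → ℝ≥0∞) (hK : ∀ n, K n = ∑ i ∈ Finset.range (n + 1), ENNReal.ofReal (pi i))
    (Kinf Linf C D : ℝ≥0∞)
    (hKinf : Kinf = ∑' i, ENNReal.ofReal (pi i))
    (hLinf : Linf = ∑' i, ENNReal.ofReal (1 / (lam i * pi i)))
    (hC : C = ∑' n, ENNReal.ofReal (1 / (lam n * pi n)) * K n)
    (hD : D = ∑' n, ENNReal.ofReal (1 / (lam n * pi n)) * (Kinf - K n))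
    (Q : ℕ → ℕ → ℝ → ℝ)
    (hQ0 : ∀ l x, Q l 0 x = 1)
    (hQ1 : ∀ l x, lam l * Q l 1 x = lam l + mu l - x)
    (hQrec : ∀ l n x, lam (n + 1 + l) * Q l (n + 2) x
      = (lam (n + 1 + l) + mu (n + 1 + l) - x) * Q l (n + 1) x - mu (n + 1 + l) * Q l n x)
    (hKfin : Kinf ≠ ⊤) (hLtop : Linf = ⊤) :
    C = ⊤ ∧ (∀ l, 1 ≤ l → Tendsto (fun n => Q l n 0) atTop atTop) ∧
      (0 < mu 0 → Tendsto (fun n => Q 0 n 0) atTop atTop) :=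
  stmt9_general lam mu pi hlam hmu hpi0 hpi K hK Linf C hLinf hC Q hQ0 hQ1 hQrec hLtop
end
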